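/- arXiv:2202.12740 — 4 statements merged into one kernel-verified Lean document; each statement's English description precedes it below -/
import Mathlib

section
/- Let G be a finite connected simple graph, let u be a vertex of G, and write N_i for the set of vertices at graph distance exactly i from u and N_{≥2} for the set of vertices at distance at least 2 from u. Let I be a maximum independent set of the induced subgraph G[N_{≥2}] which, among all maximum independent sets of G[N_{≥2}], minimizes the cardinality |I ∩ N_3|. Then for every vertex w ∈ I ∩ N_3 and every neighbour w' of w with w' ∈ N_2, the vertex w' has a neighbour belonging to I \ {w}. -/
/-! Exchanging `w` for `w'` in `I` gives, if `w'` had no other neighbour in `I`, an independent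
set in `N_{≥2}` of the same size with one vertex fewer in `N_3`, contradicting the minimality
of `|I ∩ N_3|`. -/

namespace Finset

variable {α : Type*} [DecidableEq α] {s : Finset α} {a b : α}

lemma card_insert_erase_of_mem_of_notMem (ha : a ∈ s) (hb : b ∉ s) :
    #(insert b (s.erase a)) = #s := by
  rw [card_insert_of_notMem (fun h => hb (mem_of_mem_erase h)), card_erase_add_one ha]

lemma filter_insert_erase_of_not (p : α → Prop) [DecidablePred p] (hb : ¬ p b) :
    (insert b (s.erase a)).filter p = (s.filter p).erase a := by
  rw [filter_insert, if_neg hb, filter_erase]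

end Finset

namespace SimpleGraph

variable {V : Type*} [DecidableEq V] {G : SimpleGraph V}

lemma forall_not_adj_insert_erase {I : Finset V} {w w' : V}
    (hI : ∀ x ∈ I, ∀ y ∈ I, ¬ G.Adj x y) (hw' : ∀ y ∈ I, y ≠ w → ¬ G.Adj w' y) :
    ∀ x ∈ insert w' (I.erase w), ∀ y ∈ insert w' (I.erase w), ¬ G.Adj x y := by
  simp only [Finset.mem_insert, Finset.mem_erase]
  rintro x (rfl | ⟨hxw, hx⟩) y (rfl | ⟨hyw, hy⟩) hxy
  · exact G.loopless.irrefl _ hxy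
  · exact hw' y hy hyw hxy
  · exact hw' x hx hxw hxy.symm
  · exact hI x hx y hy hxy

end SimpleGraph

open Finset in
theorem stmt0_general {V : Type*}
    (G : SimpleGraph V) (u : V)
    (I : Finset V)
    (hIsub : ∀ x ∈ I, 2 ≤ G.dist u x)
    (hIind : ∀ x ∈ I, ∀ y ∈ I, ¬ G.Adj x y)
    (hImin : ∀ J : Finset V, (∀ x ∈ J, 2 ≤ G.dist u x) →
      (∀ x ∈ J, ∀ y ∈ J, ¬ G.Adj x y) → J.card = I.card →
      (I.filter (fun x => G.dist u x = 3)).card ≤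
        (J.filter (fun x => G.dist u x = 3)).card)
    (w : V) (hwI : w ∈ I) (hw3 : G.dist u w = 3)
    (w' : V) (hadj : G.Adj w w') (hw'2 : G.dist u w' = 2) :
    ∃ z ∈ I, z ≠ w ∧ G.Adj w' z := by
  classical
  by_contra! hw'
  have hw'I : w' ∉ I := fun h => hIind w hwI w' h hadj
  have hJsub : ∀ x ∈ insert w' (I.erase w), 2 ≤ G.dist u x := by
    simp only [mem_insert]
    rintro x (rfl | hx)
    · omega
    · exact hIsub x (mem_of_mem_erase hx)
  have hw3I : w ∈ I.filter (fun x => G.dist u x = 3) := mem_filter.2 ⟨hwI, hw3⟩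
  have key := hImin _ hJsub (SimpleGraph.forall_not_adj_insert_erase hIind hw')
    (card_insert_erase_of_mem_of_notMem hwI hw'I)
  rw [filter_insert_erase_of_not _ (by omega), card_erase_of_mem hw3I] at key
  have := card_pos.2 ⟨w, hw3I⟩
  omega

/-- Let `G` be a finite connected simple graph, `u` a vertex, and `I` a maximum
independent set of the subgraph induced on the vertices at distance at least `2`
from `u` which, among all such maximum independent sets, minimizes the number of
its vertices at distance exactly `3` from `u`.  Then every vertex `w ∈ I` at
distance `3` from `u` and every neighbour `w'` of `w` at distance `2` from `u`
is such that `w'` has a neighbour in `I \ {w}`. -/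
theorem stmt0 {V : Type*} [Fintype V] [DecidableEq V]
    (G : SimpleGraph V) (hG : G.Connected) (u : V)
    (I : Finset V)
    (hIsub : ∀ x ∈ I, 2 ≤ G.dist u x)
    (hIind : ∀ x ∈ I, ∀ y ∈ I, ¬ G.Adj x y)
    (hImax : ∀ J : Finset V, (∀ x ∈ J, 2 ≤ G.dist u x) →
      (∀ x ∈ J, ∀ y ∈ J, ¬ G.Adj x y) → J.card ≤ I.card)
    (hImin : ∀ J : Finset V, (∀ x ∈ J, 2 ≤ G.dist u x) →
      (∀ x ∈ J, ∀ y ∈ J, ¬ G.Adj x y) → J.card = I.card →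
      (I.filter (fun x => G.dist u x = 3)).card ≤
        (J.filter (fun x => G.dist u x = 3)).card)
    (w : V) (hwI : w ∈ I) (hw3 : G.dist u w = 3)
    (w' : V) (hadj : G.Adj w w') (hw'2 : G.dist u w' = 2) :
    ∃ z ∈ I, z ≠ w ∧ G.Adj w' z :=
  stmt0_general G u I hIsub hIind hImin w hwI hw3 w' hadj hw'2
end

section
/- Let G be a finite connected simple graph and let u, v be vertices with dist(u,v) = D. Write N_i for the set of vertices at distance exactly i from u. Then for every integer j with 0 ≤ j ≤ D − 2, the independence number of the induced subgraph G[N_j ∪ N_{j+1} ∪ N_{j+2}] satisfies α(G[N_j ∪ N_{j+1} ∪ N_{j+2}]) + ⌊j/2⌋ + ⌊(D − 2 − j)/2⌋ ≤ α(G). -/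
/-- The independence number of a finite simple graph: the largest cardinality
of a set of pairwise non-adjacent vertices. -/
noncomputable def indepNum {V : Type*} (G : SimpleGraph V) : ℕ :=
  sSup {n | ∃ s : Finset V, (∀ x ∈ s, ∀ y ∈ s, ¬ G.Adj x y) ∧ s.card = n}

private lemma exists_dist_eq_aux {V : Type*} {G : SimpleGraph V} (hG : G.Connected)
    (u v : V) : ∀ i : ℕ, i ≤ G.dist u v → ∃ x, G.dist u x = i ∧ G.dist x v + i = G.dist u v := by
  intro i
  induction i with
  | zero => intro _; exact ⟨u, by simp [SimpleGraph.dist_self]⟩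
  | succ n ih =>
    intro hi
    obtain ⟨x, hux, hxv⟩ := ih (Nat.le_of_succ_le hi)
    have hpos : 0 < G.dist x v := by omega
    obtain ⟨p, hp⟩ := (hG x v).exists_walk_length_eq_dist
    have hnil : ¬ p.Nil := by
      rw [SimpleGraph.Walk.nil_iff_length_eq, hp]; omega
    set y := p.getVert 1 with hy
    have hadj : G.Adj x y := p.adj_snd hnil
    have h1 : G.dist y v ≤ G.dist x v - 1 := by
      have h2 : G.dist y v ≤ p.tail.length := G.dist_le p.tail
      have h3 := SimpleGraph.Walk.length_tail_add_one hnil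
      omega
    have h2 : G.dist u y ≤ n + 1 := by
      have := hG.dist_triangle (u := u) (v := x) (w := y)
      have hxy : G.dist x y ≤ 1 := by
        simpa using G.dist_le hadj.toWalk
      omega
    have h3 : G.dist u v ≤ G.dist u y + G.dist y v := hG.dist_triangle
    exact ⟨y, by omega, by omega⟩

private lemma adj_dist_le {V : Type*} {G : SimpleGraph V} (hG : G.Connected)
    {u x y : V} (h : G.Adj x y) : G.dist u x ≤ G.dist u y + 1 := by
  have h1 : G.dist u x ≤ G.dist u y + G.dist y x := hG.dist_triangle
  have h2 : G.dist y x ≤ 1 := by simpa using G.dist_le h.symm.toWalk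
  omega

private lemma le_indepNum {V : Type*} [Fintype V] (G : SimpleGraph V) (s : Finset V)
    (h : ∀ x ∈ s, ∀ y ∈ s, ¬ G.Adj x y) : s.card ≤ indepNum G := by
  apply le_csSup
  · exact ⟨Fintype.card V, fun n ⟨t, _, ht⟩ => ht ▸ t.card_le_univ⟩
  · exact ⟨s, h, rfl⟩

/-- Let `G` be a finite connected simple graph, `u v` vertices at distance `D`,
`N i` the set of vertices at distance exactly `i` from `u`.  Then for every
`0 ≤ j ≤ D - 2`,
`α(G[N j ∪ N (j+1) ∪ N (j+2)]) + ⌊j/2⌋ + ⌊(D-2-j)/2⌋ ≤ α(G)`. -/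
theorem stmt2 {V : Type*} [Fintype V] (G : SimpleGraph V) (hG : G.Connected)
    (u v : V) (D : ℕ) (hD : G.dist u v = D) (j : ℕ) (hj : j + 2 ≤ D) :
    indepNum (G.induce
        {x | G.dist u x = j ∨ G.dist u x = j + 1 ∨ G.dist u x = j + 2})
      + j / 2 + (D - 2 - j) / 2 ≤ indepNum G := by
  classical
  set M : Set V := {x | G.dist u x = j ∨ G.dist u x = j + 1 ∨ G.dist u x = j + 2} with hM
  -- choose vertices at each distance ≤ D from u
  have hex : ∀ i, i ≤ D → ∃ x, G.dist u x = i := by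
    intro i hi
    obtain ⟨x, hx, _⟩ := exists_dist_eq_aux hG u v i (by omega)
    exact ⟨x, hx⟩
  set f : ℕ → V := fun i => if h : i ≤ D then (hex i h).choose else u with hf
  have hfd : ∀ i, i ≤ D → G.dist u (f i) = i := by
    intro i hi
    simp only [hf, dif_pos hi]
    exact (hex i hi).choose_spec
  -- a maximum independent set of the induced subgraph
  have hne : ({n | ∃ s : Finset ↥M,
      (∀ x ∈ s, ∀ y ∈ s, ¬ (G.induce M).Adj x y) ∧ s.card = n}).Nonempty :=
    ⟨0, ∅, by simp⟩
  have hbdd : BddAbove {n | ∃ s : Finset ↥M,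
      (∀ x ∈ s, ∀ y ∈ s, ¬ (G.induce M).Adj x y) ∧ s.card = n} := by
    refine ⟨Fintype.card V, fun n ⟨t, _, ht⟩ => ?_⟩
    have : t.card = (t.image (Subtype.val)).card :=
      (Finset.card_image_of_injective t Subtype.val_injective).symm
    calc n = t.card := ht.symm
    _ = (t.image Subtype.val).card := this
    _ ≤ Fintype.card V := Finset.card_le_univ _
  obtain ⟨S, hSind, hScard⟩ := Nat.sSup_mem hne hbdd
  -- the sets to add
  set A : Finset V := (Finset.range (j / 2)).image (fun k => f (2 * k + j % 2)) with hA
  set B : Finset V := (Finset.range ((D - 2 - j) / 2)).image (fun k => f (j + 4 + 2 * k)) with hB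
  set S' : Finset V := S.image Subtype.val with hS'
  -- distances of the pieces
  have hdA : ∀ x ∈ A, ∃ k, k < j / 2 ∧ x = f (2 * k + j % 2) ∧ G.dist u x = 2 * k + j % 2 := by
    intro x hx
    simp only [hA, Finset.mem_image, Finset.mem_range] at hx
    obtain ⟨k, hk, rfl⟩ := hx
    exact ⟨k, hk, rfl, hfd _ (by omega)⟩
  have hdB : ∀ x ∈ B, ∃ k, k < (D - 2 - j) / 2 ∧ x = f (j + 4 + 2 * k) ∧ G.dist u x = j + 4 + 2 * k := by
    intro x hx
    simp only [hB, Finset.mem_image, Finset.mem_range] at hx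
    obtain ⟨k, hk, rfl⟩ := hx
    exact ⟨k, hk, rfl, hfd _ (by omega)⟩
  have hdS : ∀ x ∈ S', G.dist u x = j ∨ G.dist u x = j + 1 ∨ G.dist u x = j + 2 := by
    intro x hx
    simp only [hS', Finset.mem_image] at hx
    obtain ⟨⟨y, hy⟩, _, rfl⟩ := hx
    exact hy
  -- the big independent set
  set T : Finset V := S' ∪ A ∪ B with hT
  have hTind : ∀ x ∈ T, ∀ y ∈ T, ¬ G.Adj x y := by
    intro x hx y hy hadj
    have hd1 : G.dist u x ≤ G.dist u y + 1 := adj_dist_le hG hadj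
    have hd2 : G.dist u y ≤ G.dist u x + 1 := adj_dist_le hG hadj.symm
    simp only [hT, Finset.mem_union] at hx hy
    rcases hx with (hx | hx) | hx <;> rcases hy with (hy | hy) | hy
    · -- both in S'
      simp only [hS', Finset.mem_image] at hx hy
      obtain ⟨a, ha, rfl⟩ := hx
      obtain ⟨b, hb, rfl⟩ := hy
      exact hSind a ha b hb (by simpa using hadj)
    · obtain ⟨k, hk, -, hky⟩ := hdA y hy
      have := hdS x hx
      have : 2 * k + j % 2 + 2 ≤ j := by omega
      omega
    · obtain ⟨k, hk, -, hky⟩ := hdB y hy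
      have := hdS x hx
      omega
    · obtain ⟨k, hk, -, hkx⟩ := hdA x hx
      have := hdS y hy
      have : 2 * k + j % 2 + 2 ≤ j := by omega
      omega
    · obtain ⟨k1, hk1, hxe, hx1⟩ := hdA x hx
      obtain ⟨k2, hk2, hye, hy2⟩ := hdA y hy
      have hne' : x ≠ y := G.ne_of_adj hadj
      have : k1 ≠ k2 := by
        rintro rfl
        exact hne' (hxe.trans hye.symm)
      omega
    · obtain ⟨k1, hk1, hxe, hx1⟩ := hdA x hx
      obtain ⟨k2, hk2, hye, hy2⟩ := hdB y hy
      have : 2 * k1 + j % 2 + 2 ≤ j := by omega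
      omega
    · obtain ⟨k, hk, -, hkx⟩ := hdB x hx
      have := hdS y hy
      omega
    · obtain ⟨k1, hk1, hxe, hx1⟩ := hdB x hx
      obtain ⟨k2, hk2, hye, hy2⟩ := hdA y hy
      have : 2 * k2 + j % 2 + 2 ≤ j := by omega
      omega
    · obtain ⟨k1, hk1, hxe, hx1⟩ := hdB x hx
      obtain ⟨k2, hk2, hye, hy2⟩ := hdB y hy
      have hne' : x ≠ y := G.ne_of_adj hadj
      have : k1 ≠ k2 := by
        rintro rfl
        exact hne' (hxe.trans hye.symm)
      omega
  -- cardinality computations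
  have hcardA : A.card = j / 2 := by
    rw [hA, Finset.card_image_of_injOn, Finset.card_range]
    intro a ha b hb hab
    simp only [Finset.coe_range, Set.mem_Iio] at ha hb
    have h1 : G.dist u (f (2 * a + j % 2)) = 2 * a + j % 2 := hfd _ (by omega)
    have h2 : G.dist u (f (2 * b + j % 2)) = 2 * b + j % 2 := hfd _ (by omega)
    rw [show f (2 * a + j % 2) = f (2 * b + j % 2) from hab] at h1
    omega
  have hcardB : B.card = (D - 2 - j) / 2 := by
    rw [hB, Finset.card_image_of_injOn, Finset.card_range]
    intro a ha b hb hab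
    simp only [Finset.coe_range, Set.mem_Iio] at ha hb
    have h1 : G.dist u (f (j + 4 + 2 * a)) = j + 4 + 2 * a := hfd _ (by omega)
    have h2 : G.dist u (f (j + 4 + 2 * b)) = j + 4 + 2 * b := hfd _ (by omega)
    rw [show f (j + 4 + 2 * a) = f (j + 4 + 2 * b) from hab] at h1
    omega
  have hcardS' : S'.card = S.card :=
    Finset.card_image_of_injective S Subtype.val_injective
  have hdisj1 : Disjoint S' A := by
    rw [Finset.disjoint_left]
    intro x hx hxA
    obtain ⟨k, hk, -, hkx⟩ := hdA x hxA
    have := hdS x hx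
    have : 2 * k + j % 2 + 2 ≤ j := by omega
    omega
  have hdisj2 : Disjoint (S' ∪ A) B := by
    rw [Finset.disjoint_left]
    intro x hx hxB
    obtain ⟨k, hk, -, hkx⟩ := hdB x hxB
    rcases Finset.mem_union.mp hx with hx | hx
    · have := hdS x hx; omega
    · obtain ⟨k', hk', -, hk'x⟩ := hdA x hx
      have : 2 * k' + j % 2 + 2 ≤ j := by omega
      omega
  have hcardT : T.card = S.card + j / 2 + (D - 2 - j) / 2 := by
    rw [hT, Finset.card_union_of_disjoint hdisj2, Finset.card_union_of_disjoint hdisj1,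
      hcardS', hcardA, hcardB]
  have hiS : indepNum (G.induce M) = S.card := by
    rw [indepNum]; exact hScard.symm
  calc indepNum (G.induce M) + j / 2 + (D - 2 - j) / 2
      = T.card := by rw [hcardT, hiS]
    _ ≤ indepNum G := le_indepNum G T hTind
end

section
/- Let G be a finite connected simple graph and let u, v be vertices with dist(u,v) = D. Write N_i for the set of vertices at distance exactly i from u. Then for every integer j with 0 ≤ j ≤ D − 2, the independence number of the induced subgraph G[N_j ∪ N_{j+1} ∪ N_{j+2}] satisfies α(G[N_j ∪ N_{j+1} ∪ N_{j+2}]) ≤ α(G) − ⌊(D − 3)/2⌋. -/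
theorem indepNum_eq_simpleGraph_indepNum {V : Type*} (G : SimpleGraph V) :
    indepNum G = G.indepNum := by
  unfold indepNum SimpleGraph.indepNum
  congr 1
  ext n
  refine exists_congr fun s ↦ ?_
  rw [SimpleGraph.isNIndepSet_iff, SimpleGraph.isIndepSet_iff]
  refine and_congr_left fun _ ↦ ⟨fun h x hx y hy _ ↦ h x hx y hy, fun h x hx y hy ↦ ?_⟩
  obtain rfl | hxy := eq_or_ne x y
  · exact G.irrefl
  · exact h hx hy hxy

def spacedLevel (j k : ℕ) : ℕ := if k < j / 2 then 2 * k else 2 * k + 4 + j % 2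

theorem spacedLevel_gap {j k k' : ℕ} (h : k ≠ k') :
    spacedLevel j k + 2 ≤ spacedLevel j k' ∨ spacedLevel j k' + 2 ≤ spacedLevel j k := by
  unfold spacedLevel; split_ifs <;> omega

theorem spacedLevel_injective (j : ℕ) : Function.Injective (spacedLevel j) := fun k k' h ↦ by
  by_contra hkk
  have := spacedLevel_gap (j := j) hkk
  omega

theorem spacedLevel_avoid (j k : ℕ) : spacedLevel j k + 2 ≤ j ∨ j + 4 ≤ spacedLevel j k := by
  unfold spacedLevel; split_ifs <;> omega

theorem spacedLevel_le {j k D : ℕ} (hj : j + 2 ≤ D) (hk : k < (D - 3) / 2) :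
    spacedLevel j k ≤ D := by
  unfold spacedLevel; split_ifs <;> omega

namespace SimpleGraph

variable {V : Type*} {G : SimpleGraph V} {u v x y : V}

theorem Adj.dist_le_dist_add_one (h : G.Adj x y) : G.dist u y ≤ G.dist u x + 1 := by
  rcases h.diff_dist_adj (u := u) with h | h | h <;> omega

theorem not_adj_of_dist_gap
    (h : G.dist u x + 2 ≤ G.dist u y ∨ G.dist u y + 2 ≤ G.dist u x) : ¬G.Adj x y := fun hxy ↦ by
  have := hxy.dist_le_dist_add_one (u := u)
  have := hxy.symm.dist_le_dist_add_one (u := u)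
  omega

theorem Walk.dist_getVert_of_length_eq_dist {p : G.Walk u v} (hp : p.length = G.dist u v)
    {i : ℕ} (hi : i ≤ p.length) : G.dist u (p.getVert i) = i := by
  rw [← length_eq_dist_of_subwalk hp (p.isSubwalk_take i), Walk.take_length]
  omega

theorem Walk.isIndepSet_image_getVert [DecidableEq V] {p : G.Walk u v} (hp : p.length = G.dist u v)
    {I : Finset ℕ} (hI : ∀ i ∈ I, i ≤ p.length)
    (hgap : ∀ i ∈ I, ∀ i' ∈ I, i ≠ i' → i + 2 ≤ i' ∨ i' + 2 ≤ i) :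
    G.IsIndepSet (I.image p.getVert : Set V) := by
  rintro _ hx _ hy hxy
  obtain ⟨i, hi, rfl⟩ := Finset.mem_image.mp hx
  obtain ⟨i', hi', rfl⟩ := Finset.mem_image.mp hy
  apply not_adj_of_dist_gap (u := u)
  rw [dist_getVert_of_length_eq_dist hp (hI i hi), dist_getVert_of_length_eq_dist hp (hI i' hi')]
  exact hgap i hi i' hi' (ne_of_apply_ne _ hxy)

theorem Walk.card_image_getVert [DecidableEq V] {p : G.Walk u v} (hp : p.length = G.dist u v)
    {I : Finset ℕ} (hI : ∀ i ∈ I, i ≤ p.length) :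
    (I.image p.getVert).card = I.card :=
  Finset.card_image_of_injOn <| (p.isPath_of_length_eq_dist hp).getVert_injOn.mono hI

theorem IsIndepSet.map_induce {S : Set V} {s : Finset S} (hs : (G.induce S).IsIndepSet s) :
    G.IsIndepSet (s.map (Function.Embedding.subtype _) : Set V) := by
  rintro _ hx _ hy hxy
  obtain ⟨x, hxs, rfl⟩ := Finset.mem_map.mp hx
  obtain ⟨y, hys, rfl⟩ := Finset.mem_map.mp hy
  exact hs hxs hys (ne_of_apply_ne _ hxy)

theorem indepNum_induce_add_le [Finite V] {S : Set V} {j : ℕ}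
    (hS : ∀ x ∈ S, j ≤ G.dist u x ∧ G.dist u x ≤ j + 2) (hj : j + 2 ≤ G.dist u v) :
    (G.induce S).indepNum + (G.dist u v - 3) / 2 ≤ G.indepNum := by
  classical
  obtain ⟨p, hp⟩ := exists_walk_of_dist_ne_zero (G := G) (u := u) (v := v) (by omega)
  obtain ⟨s, hs⟩ := (G.induce S).exists_isNIndepSet_indepNum
  set I := (Finset.range ((G.dist u v - 3) / 2)).image (spacedLevel j)
  have hI : ∀ i ∈ I, i ≤ p.length := by
    simp only [I, Finset.mem_image, Finset.mem_range, forall_exists_index, and_imp]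
    rintro _ k hk rfl
    exact hp ▸ spacedLevel_le hj hk
  set A := s.map (Function.Embedding.subtype S)
  set P := I.image p.getVert
  have hfar : ∀ a ∈ A, ∀ b ∈ P, G.dist u a + 2 ≤ G.dist u b ∨ G.dist u b + 2 ≤ G.dist u a := by
    simp only [A, P, Finset.mem_map, Finset.mem_image, forall_exists_index, and_imp]
    rintro _ a - rfl _ i hi rfl
    obtain ⟨k, -, rfl⟩ := Finset.mem_image.mp hi
    have := hS (Function.Embedding.subtype S a) a.2
    have := spacedLevel_avoid j k
    rw [p.dist_getVert_of_length_eq_dist hp (hI _ hi)]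
    omega
  have hAP : Disjoint A P := Finset.disjoint_left.mpr fun a ha haP ↦ by
    have := hfar a ha a haP
    omega
  have hindep : G.IsIndepSet (A ∪ P : Finset V) := by
    rw [Finset.coe_union, IsIndepSet, Set.pairwise_union]
    refine ⟨hs.isIndepSet.map_induce, p.isIndepSet_image_getVert hp hI ?_, fun a ha b hb _ ↦
      ⟨not_adj_of_dist_gap (hfar a ha b hb), not_adj_of_dist_gap (hfar a ha b hb).symm⟩⟩
    simp only [I, Finset.mem_image, Finset.mem_range]
    rintro _ ⟨k, -, rfl⟩ _ ⟨k', -, rfl⟩ hkk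
    exact spacedLevel_gap (ne_of_apply_ne _ hkk)
  calc (G.induce S).indepNum + (G.dist u v - 3) / 2 = (A ∪ P).card := by
        rw [Finset.card_union_of_disjoint hAP, Finset.card_map, hs.card_eq,
          p.card_image_getVert hp hI,
          Finset.card_image_of_injective _ (spacedLevel_injective j), Finset.card_range]
    _ ≤ G.indepNum := hindep.card_le_indepNum

end SimpleGraph

theorem stmt3_general {V : Type*} [Fintype V] (G : SimpleGraph V)
    (u v : V) (D : ℕ) (hD : G.dist u v = D) (j : ℕ) (hj : j + 2 ≤ D) :
    indepNum (G.induce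
        {x | G.dist u x = j ∨ G.dist u x = j + 1 ∨ G.dist u x = j + 2})
      + (D - 3) / 2 ≤ indepNum G := by
  subst hD
  rw [indepNum_eq_simpleGraph_indepNum, indepNum_eq_simpleGraph_indepNum]
  refine G.indepNum_induce_add_le (fun x hx ↦ ?_) hj
  rcases hx with h | h | h <;> omega

/-- Let `G` be a finite connected simple graph, `u v` vertices at distance `D`,
`N i` the set of vertices at distance exactly `i` from `u`.  Then for every
`0 ≤ j ≤ D - 2`,
`α(G[N j ∪ N (j+1) ∪ N (j+2)]) ≤ α(G) - ⌊(D-3)/2⌋`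
(the floor being `0` when `D ≤ 3`). -/
theorem stmt3 {V : Type*} [Fintype V] (G : SimpleGraph V) (hG : G.Connected)
    (u v : V) (D : ℕ) (hD : G.dist u v = D) (j : ℕ) (hj : j + 2 ≤ D) :
    indepNum (G.induce
        {x | G.dist u x = j ∨ G.dist u x = j + 1 ∨ G.dist u x = j + 2})
      + (D - 3) / 2 ≤ indepNum G :=
  stmt3_general G u v D hD j hj
end

section
/- Let G be a finite connected simple graph, let Γ be a dominating set of G, let u be a vertex of G, and let a ≥ 0 and k ≥ 1 be integers such that there exists a vertex v with dist(u,v) ≥ a + 3k − 1. Then the set {x ∈ Γ : a ≤ dist(u,x) ≤ a + 3k − 1} has cardinality at least k. -/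
open SimpleGraph

private lemma dist_getVert_aux {V : Type*} (G : SimpleGraph V) (hG : G.Connected) :
    ∀ {u v : V} (p : G.Walk u v) (i : ℕ),
      G.dist u (p.getVert i) ≤ i ∧ G.dist (p.getVert i) v ≤ p.length - i := by
  intro u v p
  induction p with
  | nil => intro i; simp [SimpleGraph.Walk.getVert, SimpleGraph.dist_self]
  | @cons u w v h q ih =>
    intro i
    cases i with
    | zero =>
      refine ⟨by simp [SimpleGraph.dist_self], ?_⟩
      exact le_trans (SimpleGraph.dist_le (SimpleGraph.Walk.cons h q)) (by simp)
    | succ i =>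
      constructor
      · calc G.dist u ((SimpleGraph.Walk.cons h q).getVert (i+1))
            ≤ G.dist u w + G.dist w (q.getVert i) := hG.dist_triangle
          _ ≤ 1 + i := by
              gcongr
              · exact le_trans (SimpleGraph.dist_le h.toWalk) (by simp)
              · exact (ih i).1
          _ = i + 1 := by omega
      · have := (ih i).2
        simpa [SimpleGraph.Walk.getVert_cons_succ] using this

private lemma exists_vertex_at_dist {V : Type*} (G : SimpleGraph V) (hG : G.Connected)
    (u v : V) (d : ℕ) (hd : d ≤ G.dist u v) : ∃ w, G.dist u w = d := by
  obtain ⟨p, hp⟩ := hG.exists_walk_length_eq_dist u v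
  refine ⟨p.getVert d, ?_⟩
  obtain ⟨h1, h2⟩ := dist_getVert_aux G hG p d
  have h3 : G.dist u v ≤ G.dist u (p.getVert d) + G.dist (p.getVert d) v :=
    hG.dist_triangle
  omega

/-- Let `G` be a finite connected simple graph, `Γ` a dominating set of `G`,
`u` a vertex, and `a ≥ 0`, `k ≥ 1` integers such that some vertex `v` satisfies
`dist u v ≥ a + 3k - 1`.  Then at least `k` vertices `x` of `Γ` satisfy
`a ≤ dist u x ≤ a + 3k - 1`. -/
theorem stmt7 {V : Type*} [Fintype V] [DecidableEq V]
    (G : SimpleGraph V) (hG : G.Connected)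
    (Γ : Finset V) (hdom : ∀ x, x ∈ Γ ∨ ∃ y ∈ Γ, G.Adj x y)
    (u : V) (a k : ℕ) (hk : 1 ≤ k)
    (hv : ∃ v, a + 3 * k - 1 ≤ G.dist u v) :
    k ≤ (Γ.filter
      (fun x => a ≤ G.dist u x ∧ G.dist u x ≤ a + 3 * k - 1)).card := by
  classical
  obtain ⟨v, hv⟩ := hv
  have key : ∀ i : Fin k, ∃ x, x ∈ Γ ∧ a + 3 * i ≤ G.dist u x ∧ G.dist u x ≤ a + 3 * i + 2 := by
    intro i
    have hi : (i : ℕ) < k := i.isLt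
    have hd : a + 3 * (i : ℕ) + 1 ≤ G.dist u v := by omega
    obtain ⟨w, hw⟩ := exists_vertex_at_dist G hG u v (a + 3 * (i : ℕ) + 1) hd
    rcases hdom w with hwΓ | ⟨y, hyΓ, hadj⟩
    · exact ⟨w, hwΓ, by omega, by omega⟩
    · refine ⟨y, hyΓ, ?_, ?_⟩
      · have : G.dist u w ≤ G.dist u y + G.dist y w := hG.dist_triangle
        have h1 : G.dist y w ≤ 1 := le_trans (SimpleGraph.dist_le hadj.symm.toWalk) (by simp)
        omega
      · have : G.dist u y ≤ G.dist u w + G.dist w y := hG.dist_triangle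
        have h1 : G.dist w y ≤ 1 := le_trans (SimpleGraph.dist_le hadj.toWalk) (by simp)
        omega
  choose f hfΓ hf1 hf2 using key
  have hmaps : ∀ i ∈ (Finset.univ : Finset (Fin k)),
      f i ∈ Γ.filter (fun x => a ≤ G.dist u x ∧ G.dist u x ≤ a + 3 * k - 1) := by
    intro i _
    simp only [Finset.mem_filter]
    refine ⟨hfΓ i, ?_, ?_⟩
    · have := hf1 i; omega
    · have h2 := hf2 i
      have hi : (i : ℕ) < k := i.isLt
      omega
  have hinj : Set.InjOn f (Finset.univ : Finset (Fin k)) := by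
    intro i _ j _ hij
    by_contra hne
    have hne' : (i : ℕ) ≠ (j : ℕ) := fun h => hne (Fin.ext h)
    rcases Nat.lt_or_ge (i : ℕ) (j : ℕ) with h | h
    · have h1 := hf2 i; have h2 := hf1 j; rw [← hij] at h2; omega
    · have h1 := hf2 j; have h2 := hf1 i; rw [hij] at h2; omega
  calc k = (Finset.univ : Finset (Fin k)).card := by simp
    _ ≤ _ := Finset.card_le_card_of_injOn f hmaps hinj
end
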